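/- For 0 < r < 1, the operator h₂ := ∂ρ/∂θ − (1/2)(ρL₂ + L₂ρ) equals ((6r − 4r³ + 3(1-r²)·log((1-r)/(1+r)))/(8r²)) · [[sinθ, -cosθ·e^{-iφ}],[-cosθ·e^{iφ}, -sinθ]]. -/

import Mathlib

open Real Matrix

noncomputable def rho (r θ φ : ℝ) : Matrix (Fin 2) (Fin 2) ℂ :=
  (1 / 2 : ℂ) •
    !![(1 + r * Real.cos θ : ℂ), r * Complex.exp (-Complex.I * φ) * Real.sin θ;
       r * Complex.exp (Complex.I * φ) * Real.sin θ, (1 - r * Real.cos θ : ℂ)]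

noncomputable def L2 (r θ φ : ℝ) : Matrix (Fin 2) (Fin 2) ℂ :=
  ((3 / (4 * r ^ 2) * (2 * r + (1 - r ^ 2) * Real.log ((1 - r) / (1 + r))) : ℝ) : ℂ) •
    !![(-Real.sin θ : ℂ), Complex.exp (-Complex.I * φ) * Real.cos θ;
       Complex.exp (Complex.I * φ) * Real.cos θ, (Real.sin θ : ℂ)]

/-- Entrywise derivative of `ρ` with respect to `θ`. -/
noncomputable def dRhodTheta (r θ φ : ℝ) : Matrix (Fin 2) (Fin 2) ℂ :=
  Matrix.of fun i j => deriv (fun θ' => rho r θ' φ i j) θ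

/-!
With `n = (sin θ cos φ, sin θ sin φ, cos θ)` the Bloch vector and `σ` the Pauli matrices,
`ρ = ½ (1 + r n·σ)`, `∂ρ/∂θ = (r/2) ∂θn·σ` and `L₂ = c ∂θn·σ` for the scalar `c` in front of `L₂`.
Since `n ⊥ ∂θn`, the matrices `n·σ` and `∂θn·σ` anticommute, so `ρL₂ + L₂ρ = c ∂θn·σ` and
`h₂ = ((r - c)/2) ∂θn·σ`; the claimed coefficient is `(c - r)/2` written over a common denominator.
-/

theorem smul_one_add_smul_mul_add_mul_of_anticomm {R A : Type*} [CommRing R] [Ring A]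
    [Algebra R A] {N M : A} (h : N * M + M * N = 0) (a b c : R) :
    a • (1 + b • N) * (c • M) + c • M * (a • (1 + b • N)) = (2 * a * c) • M := by
  simp only [add_mul, mul_add, one_mul, mul_one, mul_smul_comm, smul_mul_assoc]
  linear_combination (norm := module) (a * b * c) • h

/-- `n·σ` for the Bloch vector `n = (sin θ cos φ, sin θ sin φ, cos θ)`. -/
noncomputable def blochMatrix (θ φ : ℝ) : Matrix (Fin 2) (Fin 2) ℂ :=
  !![(Real.cos θ : ℂ), Complex.exp (-Complex.I * φ) * Real.sin θ;
     Complex.exp (Complex.I * φ) * Real.sin θ, (-Real.cos θ : ℂ)]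

/-- `∂θn·σ`, the θ-derivative of `blochMatrix`. -/
noncomputable def blochTangentMatrix (θ φ : ℝ) : Matrix (Fin 2) (Fin 2) ℂ :=
  !![(-Real.sin θ : ℂ), Complex.exp (-Complex.I * φ) * Real.cos θ;
     Complex.exp (Complex.I * φ) * Real.cos θ, (Real.sin θ : ℂ)]

theorem blochMatrix_anticomm (θ φ : ℝ) :
    blochMatrix θ φ * blochTangentMatrix θ φ + blochTangentMatrix θ φ * blochMatrix θ φ = 0 := by
  have hexp : Complex.exp (-(Complex.I * φ)) * Complex.exp (Complex.I * φ) = 1 := by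
    rw [← Complex.exp_add, neg_add_cancel, Complex.exp_zero]
  ext i j
  fin_cases i <;> fin_cases j <;> simp [blochMatrix, blochTangentMatrix, neg_mul]
  · linear_combination (2 * Complex.sin θ * Complex.cos θ) * hexp
  · ring
  · ring
  · linear_combination (2 * Complex.sin θ * Complex.cos θ) * hexp

theorem hasDerivAt_blochMatrix_apply (θ φ : ℝ) (i j : Fin 2) :
    HasDerivAt (fun θ' => blochMatrix θ' φ i j) (blochTangentMatrix θ φ i j) θ := by
  have hcos := (Complex.hasDerivAt_cos θ).comp_ofReal
  have hsin := (Complex.hasDerivAt_sin θ).comp_ofReal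
  fin_cases i <;> fin_cases j <;> simp [blochMatrix, blochTangentMatrix]
  · exact hcos
  · exact hsin.const_mul _
  · exact hsin.const_mul _
  · exact hcos.neg.congr_deriv (neg_neg _)

theorem rho_eq_blochMatrix (r θ φ : ℝ) :
    rho r θ φ = (1 / 2 : ℂ) • (1 + (r : ℂ) • blochMatrix θ φ) := by
  rw [rho, blochMatrix]
  congr 1
  ext i j
  fin_cases i <;> fin_cases j <;> simp <;> ring

theorem dRhodTheta_eq_blochTangentMatrix (r θ φ : ℝ) :
    dRhodTheta r θ φ = ((r / 2 : ℝ) : ℂ) • blochTangentMatrix θ φ := by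
  ext i j
  have hderiv := (((hasDerivAt_blochMatrix_apply θ φ i j).const_mul (r : ℂ)).const_add
    ((1 : Matrix (Fin 2) (Fin 2) ℂ) i j)).const_mul (1 / 2 : ℂ)
  simp only [dRhodTheta, rho_eq_blochMatrix, Matrix.of_apply, Matrix.smul_apply,
    Matrix.add_apply, smul_eq_mul]
  rw [hderiv.deriv]
  push_cast
  ring

theorem neg_blochTangentMatrix (θ φ : ℝ) :
    -blochTangentMatrix θ φ =
      !![(Real.sin θ : ℂ), -Real.cos θ * Complex.exp (-Complex.I * φ);
         -Real.cos θ * Complex.exp (Complex.I * φ), (-Real.sin θ : ℂ)] := by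
  ext i j
  fin_cases i <;> fin_cases j <;> simp [blochTangentMatrix] <;> ring

theorem h2_coeff_eq (r L : ℝ) :
    (6 * r - 4 * r ^ 3 + 3 * (1 - r ^ 2) * L) / (8 * r ^ 2) =
      (3 / (4 * r ^ 2) * (2 * r + (1 - r ^ 2) * L) - r) / 2 := by
  rcases eq_or_ne r 0 with rfl | hr
  · simp
  · field_simp
    ring

theorem h2_formula_general (r θ φ : ℝ) :
    dRhodTheta r θ φ - (1 / 2 : ℂ) • (rho r θ φ * L2 r θ φ + L2 r θ φ * rho r θ φ) =
      (((6 * r - 4 * r ^ 3 + 3 * (1 - r ^ 2) * Real.log ((1 - r) / (1 + r))) / (8 * r ^ 2) : ℝ) : ℂ) •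
        !![(Real.sin θ : ℂ), -Real.cos θ * Complex.exp (-Complex.I * φ);
           -Real.cos θ * Complex.exp (Complex.I * φ), (-Real.sin θ : ℂ)] := by
  set c : ℝ := 3 / (4 * r ^ 2) * (2 * r + (1 - r ^ 2) * Real.log ((1 - r) / (1 + r))) with hc
  have hL2 : L2 r θ φ = (c : ℂ) • blochTangentMatrix θ φ := rfl
  rw [dRhodTheta_eq_blochTangentMatrix, rho_eq_blochMatrix, hL2,
    smul_one_add_smul_mul_add_mul_of_anticomm (blochMatrix_anticomm θ φ), h2_coeff_eq, ← hc,
    ← neg_blochTangentMatrix]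
  push_cast
  module

theorem h2_formula (r θ φ : ℝ) (hr : 0 < r) (hr1 : r < 1) :
    dRhodTheta r θ φ - (1 / 2 : ℂ) • (rho r θ φ * L2 r θ φ + L2 r θ φ * rho r θ φ) =
      (((6 * r - 4 * r ^ 3 + 3 * (1 - r ^ 2) * Real.log ((1 - r) / (1 + r))) / (8 * r ^ 2) : ℝ) : ℂ) •
        !![(Real.sin θ : ℂ), -Real.cos θ * Complex.exp (-Complex.I * φ);
           -Real.cos θ * Complex.exp (Complex.I * φ), (-Real.sin θ : ℂ)] :=
  h2_formula_general r θ φ
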